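/- arXiv:2307.11347 — 3 statements merged into one kernel-verified Lean document; each statement's English description precedes it below -/
import Mathlib

section
/- If the t-structure (D^{≤0}, D^{≥1}) is nondegenerate, then every intermediate preaisle in D is homology-determined. -/
open CategoryTheory Limits ZeroObject

namespace ICEPaper

section AbelianPart


variable {A : Type*} [Category A] [Abelian A]

/-- A full additive subcategory (given by its class of objects), closed under isomorphisms. -/
structure IsSubcat (C : Set A) : Prop where
  mem_of_iso : ∀ ⦃X Y : A⦄, (X ≅ Y) → X ∈ C → Y ∈ C
  zero_mem : (0 : A) ∈ C
  biprod_mem : ∀ ⦃X Y : A⦄, X ∈ C → Y ∈ C → (X ⊞ Y) ∈ C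

/-- `C` is closed under extensions. -/
def ClosedUnderExtensions (C : Set A) : Prop :=
  ∀ (S : ShortComplex A), S.ShortExact → S.X₁ ∈ C → S.X₃ ∈ C → S.X₂ ∈ C

/-- `C` is closed under quotients in `A`. -/
def ClosedUnderQuotients (C : Set A) : Prop :=
  ∀ ⦃X Y : A⦄ (f : X ⟶ Y), Epi f → X ∈ C → Y ∈ C

/-- `C` is closed under images. -/
def ClosedUnderImages (C : Set A) : Prop :=
  ∀ ⦃X Y : A⦄ (f : X ⟶ Y), X ∈ C → Y ∈ C → image f ∈ C

/-- `C` is closed under cokernels. -/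
def ClosedUnderCokernels (C : Set A) : Prop :=
  ∀ ⦃X Y : A⦄ (f : X ⟶ Y), X ∈ C → Y ∈ C → cokernel f ∈ C

/-- `C` is closed under kernels. -/
def ClosedUnderKernels (C : Set A) : Prop :=
  ∀ ⦃X Y : A⦄ (f : X ⟶ Y), X ∈ C → Y ∈ C → kernel f ∈ C

/-- `C` is a torsion class in `A`. -/
structure IsTorsionClass (C : Set A) : Prop where
  subcat : IsSubcat C
  ext : ClosedUnderExtensions C
  quot : ClosedUnderQuotients C

/-- `C` is a wide subcategory of `A`. -/
structure IsWide (C : Set A) : Prop where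
  subcat : IsSubcat C
  ext : ClosedUnderExtensions C
  ker : ClosedUnderKernels C
  coker : ClosedUnderCokernels C

/-- `C` is an ICE-closed subcategory of `A`. -/
structure IsICEClosed (C : Set A) : Prop where
  subcat : IsSubcat C
  im : ClosedUnderImages C
  coker : ClosedUnderCokernels C
  ext : ClosedUnderExtensions C

/-- `αC = {X ∈ C ∣ every morphism f : C' ⟶ X with C' ∈ C has ker f ∈ C}`. -/
def alphaSub (C : Set A) : Set A :=
  {X | X ∈ C ∧ ∀ ⦃C' : A⦄ (f : C' ⟶ X), C' ∈ C → kernel f ∈ C}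

/-- `D` is a torsion class in the full (wide, hence abelian) subcategory `W` of `A`:
`D ⊆ W`, and `D` is closed under extensions and quotients inside `W`.
(Here short exact sequences and epimorphisms in the wide subcategory `W` are
exactly those of `A` with terms in `W`.) -/
structure IsTorsionClassIn (W D : Set A) : Prop where
  subset : D ⊆ W
  subcat : IsSubcat D
  ext : ∀ (S : ShortComplex A), S.ShortExact → S.X₁ ∈ D → S.X₃ ∈ D → S.X₂ ∈ D
  quot : ∀ ⦃X Y : A⦄ (f : X ⟶ Y), Epi f → X ∈ D → Y ∈ W → Y ∈ D

/-- The exactness condition defining narrow sequences: for every exact sequence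
`A → B → C → D → E` with `A ∈ C(k−1)`, `B, D ∈ C(k)` and `E ∈ C(k+1)` one has `C ∈ C(k)`. -/
def NarrowCondition (C : ℤ → Set A) : Prop :=
  ∀ (k : ℤ) (S : ComposableArrows A 4), S.Exact →
    S.obj' 0 ∈ C (k - 1) → S.obj' 1 ∈ C k → S.obj' 3 ∈ C k → S.obj' 4 ∈ C (k + 1) →
    S.obj' 2 ∈ C k

/-- A narrow sequence in `A`. -/
structure IsNarrowSequence (C : ℤ → Set A) : Prop where
  subcat : ∀ k, IsSubcat (C k)
  decreasing : ∀ k, C (k + 1) ⊆ C k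
  narrow : NarrowCondition C

/-- An ICE sequence in `A`. -/
structure IsICESequence (C : ℤ → Set A) : Prop where
  ice : ∀ k, IsICEClosed (C k)
  tors : ∀ k, IsTorsionClassIn (alphaSub (C k)) (C (k + 1))

/-- The zero subcategory. -/
def zeroSubcat : Set A := {X | IsZero X}


end AbelianPart


section Approximations

variable {C : Type*} [Category C]

/-- A subcategory `B` (given by its class of objects) of a category is contravariantly finite
if every object admits a right `B`-approximation. -/
def ContravariantlyFinite (B : Set C) : Prop :=
  ∀ X : C, ∃ (B₀ : C) (_ : B₀ ∈ B) (f : B₀ ⟶ X),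
    ∀ (B' : C) (_ : B' ∈ B) (g : B' ⟶ X), ∃ h : B' ⟶ B₀, h ≫ f = g

/-- Dually, `B` is covariantly finite if every object admits a left `B`-approximation. -/
def CovariantlyFinite (B : Set C) : Prop :=
  ∀ X : C, ∃ (B₀ : C) (_ : B₀ ∈ B) (f : X ⟶ B₀),
    ∀ (B' : C) (_ : B' ∈ B) (g : X ⟶ B'), ∃ h : B₀ ⟶ B', f ≫ h = g

end Approximations

open Pretriangulated Triangulated

variable {D : Type*} [Category D] [Preadditive D] [HasZeroObject D] [HasShift D ℤ]
  [∀ n : ℤ, (shiftFunctor D n).Additive] [Pretriangulated D]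

/-- The shifted subcategory `U[k] = {X ∣ X⟦-k⟧ ∈ U}`. -/
def shiftSet (U : Set D) (k : ℤ) : Set D := {X : D | X⟦(-k)⟧ ∈ U}

/-- A preaisle: a subcategory (full, iso-closed, containing `0`) closed under extensions and
positive shifts. -/
structure IsPreaisle (U : Set D) : Prop where
  mem_of_iso : ∀ ⦃X Y : D⦄, (X ≅ Y) → X ∈ U → Y ∈ U
  zero_mem : (0 : D) ∈ U
  ext : ∀ (T : Triangle D), T ∈ (distTriang D) → T.obj₁ ∈ U → T.obj₃ ∈ U → T.obj₂ ∈ U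
  shift : ∀ ⦃X : D⦄, X ∈ U → X⟦(1 : ℤ)⟧ ∈ U

/-- A thick subcategory: a triangulated subcategory closed under direct summands. -/
structure IsThick (E : Set D) : Prop where
  mem_of_iso : ∀ ⦃X Y : D⦄, (X ≅ Y) → X ∈ E → Y ∈ E
  zero_mem : (0 : D) ∈ E
  ext : ∀ (T : Triangle D), T ∈ (distTriang D) → T.obj₁ ∈ E → T.obj₃ ∈ E → T.obj₂ ∈ E
  shift : ∀ ⦃X : D⦄ (k : ℤ), X ∈ E → X⟦k⟧ ∈ E
  summand : ∀ ⦃X Y : D⦄ (i : X ⟶ Y) (r : Y ⟶ X), i ≫ r = 𝟙 X → Y ∈ E → X ∈ E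

variable (t : TStructure D)

/-- `D^{≤n}` as a set of objects. -/
def DLE (n : ℤ) : Set D := {X : D | t.le n X}

/-- `D^{≥n}` as a set of objects. -/
def DGE (n : ℤ) : Set D := {X : D | t.ge n X}

/-- The heart `D^{≤0} ∩ D^{≥0}` of the t-structure, as a set of objects of `D`. -/
def heartSet : Set D := {X : D | t.le 0 X ∧ t.ge 0 X}

/-- The t-structure `t` is bounded. -/
def BoundedT : Prop := ∀ X : D, (∃ n : ℤ, t.le n X) ∧ (∃ n : ℤ, t.ge n X)

/-- The t-structure `t` is nondegenerate. -/
def NonDegenerateT : Prop :=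
  (∀ X : D, (∀ n : ℤ, t.le n X) → IsZero X) ∧ (∀ X : D, (∀ n : ℤ, t.ge n X) → IsZero X)

/-- `U` is an aisle: it is the aisle (`D'^{≤0}`) of some t-structure on `D`. -/
def IsAisle (U : Set D) : Prop := ∃ t' : TStructure D, U = DLE t' 0

/-- Data realizing the heart of the t-structure `t` as an abelian category `A`:
a fully faithful additive functor `ι : A ⥤ D` with essential image the heart of `t`,
identifying short exact sequences in `A` with distinguished triangles of `D` with all three
objects in the heart, together with the associated cohomological functor `H⁰ : D ⥤ A`
(characterized by being homological, restricting to the identity on the heart, and the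
standard vanishing on `D^{≤n}` and `D^{≥n}`). -/
structure HeartData (A : Type*) [Category A] [Abelian A] where
  ι : A ⥤ D
  full : ι.Full
  faithful : ι.Faithful
  additive : ι.Additive
  mem_heart : ∀ Y : A, ι.obj Y ∈ heartSet t
  heart_mem : ∀ X : D, X ∈ heartSet t → ∃ Y : A, Nonempty (ι.obj Y ≅ X)
  shortExact_iff : ∀ S : ShortComplex A, S.ShortExact ↔
    ∃ h : ι.obj S.X₃ ⟶ (ι.obj S.X₁)⟦(1 : ℤ)⟧,
      Triangle.mk (ι.map S.f) (ι.map S.g) h ∈ distTriang D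
  H0 : D ⥤ A
  homological : H0.IsHomological
  H0_additive : H0.Additive
  heartIso : ι ⋙ H0 ≅ 𝟭 A
  LE_vanish : ∀ (X : D) (n k : ℤ), t.le n X → n < k → IsZero (H0.obj (X⟦k⟧))
  GE_vanish : ∀ (X : D) (n k : ℤ), t.ge n X → k < n → IsZero (H0.obj (X⟦k⟧))

variable {t} {A : Type*} [Category A] [Abelian A] (hd : HeartData t A)

/-- The cohomology `H^k = H⁰ ∘ ⟦k⟧`, on objects. -/
def HeartData.H (k : ℤ) (X : D) : A := hd.H0.obj (X⟦k⟧)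

/-- `U ⊆ D` is homology-determined: `X ∈ U` iff `H^k X ∈ U[k]` for all `k ∈ ℤ`. -/
def IsHomDet (U : Set D) : Prop :=
  ∀ X : D, X ∈ U ↔ ∀ k : ℤ, hd.ι.obj (hd.H k X) ∈ shiftSet U k

/-- `H^k U`, the image of `U` under `H^k`, as a subcategory of the heart `A`
(closed under isomorphisms). -/
def HkSet (U : Set D) (k : ℤ) : Set A := {Y : A | ∃ X ∈ U, Nonempty (Y ≅ hd.H k X)}

/-- `θ(C) = {X ∈ D ∣ H^k X ∈ C(k) for all k ∈ ℤ}`. -/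
def thetaSet (C : ℤ → Set A) : Set D := {X : D | ∀ k : ℤ, hd.H k X ∈ C k}

/-- `E ⊆ D` is `H⁰`-stable: `H⁰ X ∈ E` for every `X ∈ E`. -/
def H0Stable (E : Set D) : Prop := ∀ X ∈ E, hd.ι.obj (hd.H 0 X) ∈ E

/-! For `X ∈ U ⊆ D^{≤0}`, rotating the truncation triangle `τ^{≤-1}X → X → H⁰X` exhibits `H⁰X`
as an extension of `(τ^{≤-1}X)[1] ∈ D^{≤-2} ⊆ U` by `X`, so `H⁰X ∈ U`; the other `(H^k X)[-k]`
lie in `D^{≤-1}` or vanish. Conversely, for `k ≥ 1` the object `(H^k X)[-k]` lies in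
`U ∩ D^{≥k} ⊆ D^{≤0} ∩ D^{≥k} = 0`. Nondegeneracy turns this vanishing into `X ∈ D^{≤0}`: the
truncation `τ^{≥1}X` has no cohomology, hence lies in every `D^{≥n}`. The same truncation triangle
then shows that `X` is an extension of `H⁰X ∈ U` by `τ^{≤-1}X ∈ U`. -/

lemma isZero_of_isZero_shift {C : Type*} [Category C] [HasShift C ℤ] {X : C} (a : ℤ)
    (h : IsZero (X⟦a⟧)) : IsZero X :=
  IsZero.of_full_of_faithful_of_isZero (shiftFunctor C a) X h

lemma IsPreaisle.mem_shiftSet_zero_iff {U : Set D} (hU : IsPreaisle U) {X : D} :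
    X ∈ shiftSet U 0 ↔ X ∈ U :=
  ⟨hU.mem_of_iso ((shiftFunctorZero' D (-0) neg_zero).app X),
    hU.mem_of_iso ((shiftFunctorZero' D (-0) neg_zero).app X).symm⟩

lemma IsPreaisle.mem_of_isZero {U : Set D} (hU : IsPreaisle U) {X : D} (hX : IsZero X) :
    X ∈ U :=
  hU.mem_of_iso hX.isoZero.symm hU.zero_mem

namespace HeartData

noncomputable def hZeroIso (X : D) : hd.H 0 X ≅ hd.H0.obj X :=
  hd.H0.mapIso ((shiftFunctorZero D ℤ).app X)

lemma isLE_shift_ι (Y : A) (k : ℤ) : t.IsLE ((hd.ι.obj Y)⟦-k⟧) k :=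
  ⟨t.le_shift 0 (-k) k (by omega) _ (hd.mem_heart Y).1⟩

lemma isGE_shift_ι (Y : A) (k : ℤ) : t.IsGE ((hd.ι.obj Y)⟦-k⟧) k :=
  ⟨t.ge_shift 0 (-k) k (by omega) _ (hd.mem_heart Y).2⟩

lemma isZero_of_isLE_shift_ι {Y : A} {n k : ℤ} (h : t.IsLE ((hd.ι.obj Y)⟦-k⟧) n)
    (hnk : n < k) : IsZero Y := by
  have := hd.full
  have := hd.faithful
  have := hd.isGE_shift_ι Y k
  exact IsZero.of_full_of_faithful_of_isZero hd.ι Y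
    (isZero_of_isZero_shift (-k) (t.isZero _ n k hnk))

lemma nonempty_iso_ι_H0_of_mem_heart {X : D} (hX : X ∈ heartSet t) :
    Nonempty (X ≅ hd.ι.obj (hd.H0.obj X)) := by
  obtain ⟨Y, ⟨e⟩⟩ := hd.heart_mem X hX
  exact ⟨e.symm ≪≫ hd.ι.mapIso ((hd.heartIso.app Y).symm ≪≫ hd.H0.mapIso e)⟩

lemma isZero_of_mem_heart {X : D} (hX : X ∈ heartSet t) (h : IsZero (hd.H0.obj X)) :
    IsZero X := by
  have := hd.additive
  obtain ⟨e⟩ := hd.nonempty_iso_ι_H0_of_mem_heart hX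
  exact (hd.ι.map_isZero h).of_iso e

lemma isZero_H_obj₂ (T : Triangle D) (hT : T ∈ distTriang D) (k : ℤ)
    (h₁ : IsZero (hd.H k T.obj₁)) (h₃ : IsZero (hd.H k T.obj₃)) : IsZero (hd.H k T.obj₂) := by
  have := hd.homological
  exact (hd.H0.map_distinguished_exact _
    (Triangle.shift_distinguished T hT k)).isZero_of_both_zeros (h₁.eq_of_src _ _) (h₃.eq_of_tgt _ _)

lemma isGE_succ_of_isZero_H {X : D} {n : ℤ} (hX : t.IsGE X n) (h : IsZero (hd.H n X)) :
    t.IsGE X (n + 1) := by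
  obtain ⟨X', X'', hX', hX'', _, g, _, hT⟩ := t.exists_triangle X n (n + 1) rfl
  have hT' := inv_rot_of_distTriang _ hT
  have hX''shift : t.IsGE (X''⟦(-1 : ℤ)⟧) (n + 2) :=
    ⟨t.ge_shift (n + 1) (-1) (n + 2) (by omega) _ hX''⟩
  have hX'ge : t.IsGE X' n := t.isGE₂ _ hT' n (t.isGE_of_ge (X''⟦(-1 : ℤ)⟧) n (n + 2)) hX
  -- `X' = τ^{≤n} X` also lies in `D^{≥n}`, and `H^n X' ↪ H^n X = 0`.
  have hX'zero : IsZero X' := by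
    refine isZero_of_isZero_shift n (hd.isZero_of_mem_heart ⟨?_, ?_⟩ ?_)
    · exact t.le_shift n n 0 (by omega) _ hX'
    · exact t.ge_shift n n 0 (by omega) _ hX'ge.ge
    · exact hd.isZero_H_obj₂ _ hT' n (hd.GE_vanish _ (n + 2) n hX''shift.ge (by omega)) h
  have : IsIso g := (Triangle.isZero₁_iff_isIso₂ _ hT).1 hX'zero
  exact ⟨(t.ge (n + 1)).prop_of_iso (asIso g).symm hX''⟩

lemma isZero_of_isGE_of_isZero_H (hnd : ∀ X : D, (∀ n : ℤ, t.ge n X) → IsZero X) {X : D}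
    {n : ℤ} (hX : t.IsGE X n) (h : ∀ k, n ≤ k → IsZero (hd.H k X)) : IsZero X := by
  have hge : ∀ m, n ≤ m → t.IsGE X m := by
    intro m hm
    induction m, hm using Int.leInduction with
    | base => exact hX
    | succ m hm ih => exact hd.isGE_succ_of_isZero_H ih (h m hm)
  refine hnd X fun m => ?_
  rcases le_total n m with hm | hm
  · exact (hge m hm).ge
  · exact t.ge_antitone hm _ hX.ge

lemma isLE_of_isZero_H (hnd : ∀ X : D, (∀ n : ℤ, t.ge n X) → IsZero X) {X : D} {n : ℤ}
    (h : ∀ k, n < k → IsZero (hd.H k X)) : t.IsLE X n := by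
  obtain ⟨X', X'', hX', hX'', f, _, _, hT⟩ := t.exists_triangle X n (n + 1) rfl
  have hX''zero : IsZero X'' := by
    refine hd.isZero_of_isGE_of_isZero_H hnd ⟨hX''⟩ fun k hk => ?_
    exact hd.isZero_H_obj₂ _ (rot_of_distTriang _ hT) k (h k (by omega))
      (hd.LE_vanish _ (n - 1) k (t.le_shift n 1 (n - 1) (by omega) _ hX') (by omega))
  have : IsIso f := (Triangle.isZero₃_iff_isIso₁ _ hT).1 hX''zero
  exact ⟨(t.le n).prop_of_iso (asIso f) hX'⟩

lemma isIso_H0_map_mor₂ (T : Triangle D) (hT : T ∈ distTriang D) (h₁ : t.IsLE T.obj₁ (-1)) :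
    IsIso (hd.H0.map T.mor₂) := by
  have := hd.homological
  have : Mono (hd.H0.map T.mor₂) := (hd.H0.map_distinguished_exact _ hT).mono_g
    (((hd.LE_vanish _ (-1) 0 h₁.le (by omega)).of_iso (hd.hZeroIso _).symm).eq_of_src _ _)
  have : Epi (hd.H0.map T.mor₂) := (hd.H0.map_distinguished_exact _ (rot_of_distTriang _ hT)).epi_f
    ((hd.LE_vanish _ (-1) 1 h₁.le (by omega)).eq_of_tgt _ _)
  exact isIso_of_mono_of_epi _

lemma exists_distTriang_iso_ι_H0 {X : D} (hX : t.IsLE X 0) :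
    ∃ (X' X'' : D) (_ : t.IsLE X' (-1)) (f : X' ⟶ X) (g : X ⟶ X'') (δ : X'' ⟶ X'⟦(1 : ℤ)⟧),
      Triangle.mk f g δ ∈ distTriang D ∧ Nonempty (X'' ≅ hd.ι.obj (hd.H0.obj X)) := by
  obtain ⟨X', X'', hX', hX'', f, g, δ, hT⟩ := t.exists_triangle X (-1) 0 (by omega)
  have hX'shift : t.IsLE (X'⟦(1 : ℤ)⟧) 0 :=
    ⟨t.le_monotone (by omega : (-2 : ℤ) ≤ 0) _ (t.le_shift (-1) 1 (-2) (by omega) _ hX')⟩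
  have hX''le : t.IsLE X'' 0 := t.isLE₂ _ (rot_of_distTriang _ hT) 0 hX hX'shift
  obtain ⟨e⟩ := hd.nonempty_iso_ι_H0_of_mem_heart ⟨hX''le.le, hX''⟩
  have : IsIso (hd.H0.map g) := hd.isIso_H0_map_mor₂ _ hT ⟨hX'⟩
  exact ⟨X', X'', ⟨hX'⟩, f, g, δ, hT, ⟨e ≪≫ hd.ι.mapIso (asIso (hd.H0.map g)).symm⟩⟩

end HeartData

/-- **Proposition.** If the t-structure is nondegenerate, then every intermediate preaisle
(`D^{≤-1} ⊆ U ⊆ D^{≤0}`) in `D` is homology-determined. -/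
theorem isHomDet_of_intermediate_preaisle
    {D : Type*} [Category D] [Preadditive D] [HasZeroObject D] [HasShift D ℤ]
    [∀ n : ℤ, (shiftFunctor D n).Additive] [Pretriangulated D]
    {t : Triangulated.TStructure D} {A : Type*} [Category A] [Abelian A]
    (hd : HeartData t A) (hnd : NonDegenerateT t)
    {U : Set D} (hU : IsPreaisle U) (h₁ : DLE t (-1) ⊆ U) (h₂ : U ⊆ DLE t 0) :
    IsHomDet hd U := by
  have := hd.additive
  intro X
  have hH0 : hd.ι.obj (hd.H 0 X) ∈ shiftSet U 0 ↔ hd.ι.obj (hd.H0.obj X) ∈ U := by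
    rw [hU.mem_shiftSet_zero_iff]
    exact ⟨hU.mem_of_iso (hd.ι.mapIso (hd.hZeroIso X)),
      hU.mem_of_iso (hd.ι.mapIso (hd.hZeroIso X)).symm⟩
  constructor
  · intro hX k
    have hX0 : t.IsLE X 0 := ⟨h₂ hX⟩
    rcases lt_trichotomy k 0 with hk | rfl | hk
    · have := hd.isLE_shift_ι (hd.H k X) k
      exact h₁ (t.isLE_of_le _ k (-1)).le
    · obtain ⟨X', X'', hX', _, _, _, hT, ⟨e⟩⟩ := hd.exists_distTriang_iso_ι_H0 hX0
      have hX'shift : t.le (-1) (X'⟦(1 : ℤ)⟧) :=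
        t.le_monotone (by omega : (-2 : ℤ) ≤ -1) _ (t.le_shift (-1) 1 (-2) (by omega) _ hX'.le)
      exact hH0.2 (hU.mem_of_iso e (hU.ext _ (rot_of_distTriang _ hT) hX (h₁ hX'shift)))
    · exact hU.mem_of_isZero (Functor.map_isZero _
        (hd.ι.map_isZero (hd.LE_vanish X 0 k hX0.le hk)))
  · intro hH
    have hX0 : t.IsLE X 0 := hd.isLE_of_isZero_H hnd.2 fun k hk =>
      hd.isZero_of_isLE_shift_ι ⟨h₂ (hH k)⟩ hk
    obtain ⟨X', X'', hX', _, _, _, hT, ⟨e⟩⟩ := hd.exists_distTriang_iso_ι_H0 hX0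
    exact hU.ext _ hT (h₁ hX'.le) (hU.mem_of_iso e.symm (hH0.1 (hH 0)))

end ICEPaper
end

section
/- For any abelian category A, there is a bijective correspondence between the set of ICE sequences in A of length 2 and the set of torsion classes in A, given by {C(k)}_{k∈ℤ} ↦ C(0). -/
open CategoryTheory Limits ZeroObject

namespace ICEPaper

variable {A : Type*} [Category A] [Abelian A]

/-!
Every ICE sequence is decreasing, since `C(k+1) ⊆ αC(k) ⊆ C(k)`. With `C(1) = 0` and
`C(-1) = A` this forces `C(k) = 0` for `k ≥ 1` and `C(k) = A` for `k ≤ -1`, so the sequence is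
determined by `C(0)`, which is a torsion class in `αA = A`. Conversely, for a torsion class `T`
the sequence `⋯ = A ⊇ T ⊇ 0 = ⋯` is ICE: the only nontrivial condition is that `0` is a
torsion class in `αC`, which holds for every subcategory `C`.
-/

lemma IsSubcat.zeroSubcat_subset {C : Set A} (hC : IsSubcat C) : zeroSubcat ⊆ C :=
  fun _ hX => hC.mem_of_iso hX.isoZero.symm hC.zero_mem

lemma isSubcat_zeroSubcat : IsSubcat (zeroSubcat : Set A) where
  mem_of_iso _ _ e hX := hX.of_iso e.symm
  zero_mem := isZero_zero A
  biprod_mem X Y hX hY := (biprod_isZero_iff X Y).2 ⟨hX, hY⟩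

lemma closedUnderExtensions_zeroSubcat : ClosedUnderExtensions (zeroSubcat : Set A) := by
  intro S hS h₁ h₃
  have : Epi S.f := (S.exact_iff_epi (h₃.eq_of_tgt _ _)).1 hS.exact
  exact IsZero.of_epi_eq_zero S.f (h₁.eq_of_src _ _)

lemma isICEClosed_zeroSubcat : IsICEClosed (zeroSubcat : Set A) where
  subcat := isSubcat_zeroSubcat
  im _ _ f _ hY := IsZero.of_mono_eq_zero (image.ι f) (hY.eq_of_tgt _ _)
  coker _ _ f _ hY := IsZero.of_epi_eq_zero (cokernel.π f) (hY.eq_of_src _ _)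
  ext := closedUnderExtensions_zeroSubcat

lemma isTorsionClass_univ : IsTorsionClass (Set.univ : Set A) :=
  ⟨⟨fun _ _ _ _ => trivial, trivial, fun _ _ _ _ => trivial⟩,
    fun _ _ _ _ => trivial, fun _ _ _ _ _ => trivial⟩

lemma IsTorsionClass.isICEClosed {T : Set A} (hT : IsTorsionClass T) : IsICEClosed T where
  subcat := hT.subcat
  im _ _ f hX _ := hT.quot (factorThruImage f) inferInstance hX
  coker _ _ f _ hY := hT.quot (cokernel.π f) inferInstance hY
  ext := hT.ext

lemma alphaSub_univ : alphaSub (Set.univ : Set A) = Set.univ :=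
  Set.eq_univ_of_forall fun _ => ⟨trivial, fun _ _ _ => trivial⟩

lemma isTorsionClassIn_univ_iff {T : Set A} :
    IsTorsionClassIn Set.univ T ↔ IsTorsionClass T :=
  ⟨fun h => ⟨h.subcat, h.ext, fun _ _ f hf hX => h.quot f hf hX trivial⟩,
    fun h => ⟨Set.subset_univ T, h.subcat, h.ext, fun _ _ f hf hX _ => h.quot f hf hX⟩⟩

/-- A morphism into a zero object has its source as kernel, so `0 ⊆ αC`. -/
lemma isTorsionClassIn_alphaSub_zeroSubcat {C : Set A} (hC : IsSubcat C) :
    IsTorsionClassIn (alphaSub C) zeroSubcat where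
  subset X hX := ⟨hC.zeroSubcat_subset hX, fun _ f hC' => by
    obtain rfl : f = 0 := hX.eq_of_tgt _ _
    exact hC.mem_of_iso kernelZeroIsoSource.symm hC'⟩
  subcat := isSubcat_zeroSubcat
  ext := closedUnderExtensions_zeroSubcat
  quot _ _ f _ hX _ := IsZero.of_epi_eq_zero f (hX.eq_of_src _ _)

lemma IsICESequence.antitone {C : ℤ → Set A} (hC : IsICESequence C) : Antitone C :=
  antitone_int_of_succ_le fun k _ hX => ((hC.tors k).subset hX).1

lemma IsICESequence.isTorsionClass_zero {C : ℤ → Set A} (hC : IsICESequence C)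
    (hC_neg : C (-1) = Set.univ) : IsTorsionClass (C 0) := by
  simpa [hC_neg, alphaSub_univ, isTorsionClassIn_univ_iff] using hC.tors (-1)

def lengthTwoSeq (T : Set A) (k : ℤ) : Set A :=
  if 0 < k then zeroSubcat else if k = 0 then T else Set.univ

omit [Abelian A] in
lemma lengthTwoSeq_of_pos (T : Set A) {k : ℤ} (hk : 0 < k) : lengthTwoSeq T k = zeroSubcat :=
  if_pos hk

omit [Abelian A] in
lemma lengthTwoSeq_of_neg (T : Set A) {k : ℤ} (hk : k < 0) : lengthTwoSeq T k = Set.univ := by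
  simp [lengthTwoSeq, hk.not_gt, hk.ne]

lemma isTorsionClass_lengthTwoSeq_of_nonpos {T : Set A} (hT : IsTorsionClass T) {k : ℤ}
    (hk : k ≤ 0) : IsTorsionClass (lengthTwoSeq T k) := by
  rcases hk.lt_or_eq with hk | rfl
  · rw [lengthTwoSeq_of_neg T hk]; exact isTorsionClass_univ
  · exact hT

lemma isICEClosed_lengthTwoSeq {T : Set A} (hT : IsTorsionClass T) (k : ℤ) :
    IsICEClosed (lengthTwoSeq T k) := by
  rcases lt_or_ge 0 k with hk | hk
  · rw [lengthTwoSeq_of_pos T hk]; exact isICEClosed_zeroSubcat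
  · exact (isTorsionClass_lengthTwoSeq_of_nonpos hT hk).isICEClosed

lemma isICESequence_lengthTwoSeq {T : Set A} (hT : IsTorsionClass T) :
    IsICESequence (lengthTwoSeq T) where
  ice := isICEClosed_lengthTwoSeq hT
  tors k := by
    rcases lt_or_ge k 0 with hk | hk
    · rw [lengthTwoSeq_of_neg T hk, alphaSub_univ, isTorsionClassIn_univ_iff]
      exact isTorsionClass_lengthTwoSeq_of_nonpos hT (by omega)
    · rw [lengthTwoSeq_of_pos T (by omega : 0 < k + 1)]
      exact isTorsionClassIn_alphaSub_zeroSubcat (isICEClosed_lengthTwoSeq hT k).subcat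

lemma IsICESequence.eq_lengthTwoSeq {C : ℤ → Set A} (hC : IsICESequence C)
    (hC_one : C 1 = zeroSubcat) (hC_neg : C (-1) = Set.univ) : C = lengthTwoSeq (C 0) := by
  funext k
  rcases lt_trichotomy k 0 with hk | rfl | hk
  · rw [lengthTwoSeq_of_neg _ hk]
    exact Set.eq_univ_of_univ_subset (hC_neg ▸ hC.antitone (by omega : k ≤ -1))
  · rfl
  · rw [lengthTwoSeq_of_pos _ hk]
    exact (hC_one ▸ hC.antitone (by omega : 1 ≤ k)).antisymm (hC.ice k).subcat.zeroSubcat_subset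

/-- **Proposition.** For any abelian category `A`, the assignment `{C(k)}_{k∈ℤ} ↦ C(0)` is a
bijective correspondence between ICE sequences in `A` of length 2 (i.e. with `C(1) = 0` and
`C(-1) = A`) and torsion classes in `A`. -/
theorem iceSequencesLengthTwo_equiv_torsionClasses {A : Type*} [Category A] [Abelian A] :
    ∃ e : {C : ℤ → Set A // IsICESequence C ∧ C 1 = zeroSubcat ∧ C (-1) = Set.univ} ≃
        {T : Set A // IsTorsionClass T},
      ∀ C, (e C).1 = C.1 0 :=
  ⟨{ toFun := fun C => ⟨C.1 0, C.2.1.isTorsionClass_zero C.2.2.2⟩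
     invFun := fun T => ⟨lengthTwoSeq T.1, isICESequence_lengthTwoSeq T.2,
       lengthTwoSeq_of_pos _ one_pos, lengthTwoSeq_of_neg _ (by norm_num)⟩
     left_inv := fun C => Subtype.ext (C.2.1.eq_lengthTwoSeq C.2.2.1 C.2.2.2).symm
     right_inv := fun _ => rfl },
    fun _ => rfl⟩

end ICEPaper
end

section
/- Let U be a homology-determined aisle in D. Then H^k U is a contravariantly finite subcategory of the heart H for every k ∈ ℤ. -/
/-! The truncation `τ^{≤0} Z → Z` is a right approximation of `Z` by the aisle `U`. Since `U`
is homology-determined, `H^k U` consists exactly of the objects `Y` of the heart with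
`Y⟦-k⟧ ∈ U`, and `H^k` retracts `Y ↦ Y⟦-k⟧`; so `H^k` of the truncation of `Y⟦-k⟧` is a right
`H^k U`-approximation of `Y`. -/

open CategoryTheory Limits ZeroObject

namespace ICEPaper

open Pretriangulated Triangulated

variable {D : Type*} [Category D] [Preadditive D] [HasZeroObject D] [HasShift D ℤ]
  [∀ n : ℤ, (shiftFunctor D n).Additive] [Pretriangulated D]

variable (t : TStructure D)

variable {t} {A : Type*} [Category A] [Abelian A] (hd : HeartData t A)

section Retraction

variable {C E : Type*} [Category C] [Category E] {F : C ⥤ E} {G : E ⥤ C}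

theorem ContravariantlyFinite.preimage {V : Set E} (hV : ContravariantlyFinite V)
    (e : F ⋙ G ≅ 𝟭 C) (hGV : ∀ X ∈ V, F.obj (G.obj X) ∈ V) :
    ContravariantlyFinite {B | F.obj B ∈ V} := by
  intro Y
  obtain ⟨X₀, hX₀, a, ha⟩ := hV (F.obj Y)
  refine ⟨G.obj X₀, hGV X₀ hX₀, G.map a ≫ e.hom.app Y, fun B hB g => ?_⟩
  obtain ⟨h, hh⟩ := ha (F.obj B) hB (F.map g)
  refine ⟨e.inv.app B ≫ G.map h, ?_⟩
  have hnat : G.map (F.map g) ≫ e.hom.app Y = e.hom.app B ≫ g := e.hom.naturality g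
  simp only [Category.assoc, ← G.map_comp_assoc, hh, hnat, Iso.inv_hom_id_app_assoc]

theorem setOf_iso_obj_eq_preimage {V : Set E} (e : F ⋙ G ≅ 𝟭 C)
    (hV : ∀ ⦃X Y : E⦄, (X ≅ Y) → X ∈ V → Y ∈ V) (hGV : ∀ X ∈ V, F.obj (G.obj X) ∈ V) :
    {B | ∃ X ∈ V, Nonempty (B ≅ G.obj X)} = {B | F.obj B ∈ V} := by
  ext B
  constructor
  · rintro ⟨X, hX, ⟨i⟩⟩
    exact hV (F.mapIso i).symm (hGV X hX)
  · intro hB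
    exact ⟨F.obj B, hB, ⟨(e.app B).symm⟩⟩

end Retraction

theorem contravariantlyFinite_DLE (t : TStructure D) (n : ℤ) :
    ContravariantlyFinite (DLE t n) := by
  intro Z
  obtain ⟨X, Y, hX, hY, a, b, c, hT⟩ := t.exists_triangle Z n (n + 1) rfl
  refine ⟨X, hX, a, fun B hB g => ?_⟩
  have : t.IsLE B n := ⟨hB⟩
  have : t.IsGE Y (n + 1) := ⟨hY⟩
  obtain ⟨h, hh⟩ := Triangle.coyoneda_exact₂ _ hT g (t.zero (g ≫ b) n (n + 1))
  exact ⟨h, hh.symm⟩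

def HeartData.shiftIso (k : ℤ) :
    (hd.ι ⋙ shiftFunctor D (-k)) ⋙ (shiftFunctor D k ⋙ hd.H0) ≅ 𝟭 A :=
  Functor.isoWhiskerLeft hd.ι
      (Functor.isoWhiskerRight (shiftFunctorCompIsoId D (-k) k (neg_add_cancel k)) hd.H0) ≪≫
    hd.heartIso

theorem HkSet_eq_of_isHomDet {U : Set D} (hU : ∀ ⦃X Y : D⦄, (X ≅ Y) → X ∈ U → Y ∈ U)
    (hdet : IsHomDet hd U) (k : ℤ) :
    HkSet hd U k = {B | (hd.ι ⋙ shiftFunctor D (-k)).obj B ∈ U} :=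
  setOf_iso_obj_eq_preimage (hd.shiftIso k) hU fun X hX => (hdet X).1 hX k

/-- **Proposition.** Let `U` be a homology-determined aisle in `D`. Then `H^k U` is a
contravariantly finite subcategory of the heart `H` for every `k ∈ ℤ`. -/
theorem contravariantlyFinite_HkSet_of_homDet_aisle
    {D : Type*} [Category D] [Preadditive D] [HasZeroObject D] [HasShift D ℤ]
    [∀ n : ℤ, (shiftFunctor D n).Additive] [Pretriangulated D]
    {t : Triangulated.TStructure D} {A : Type*} [Category A] [Abelian A]
    (hd : HeartData t A) {U : Set D} (hU : IsAisle U) (hdet : IsHomDet hd U) :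
    ∀ k : ℤ, ContravariantlyFinite (HkSet hd U k) := by
  intro k
  obtain ⟨t', rfl⟩ := hU
  have hiso : ∀ ⦃X Y : D⦄, (X ≅ Y) → X ∈ DLE t' 0 → Y ∈ DLE t' 0 :=
    fun _ _ e h => (t'.le 0).prop_of_iso e h
  rw [HkSet_eq_of_isHomDet hd hiso hdet k]
  exact (contravariantlyFinite_DLE t' 0).preimage (hd.shiftIso k) fun X hX => (hdet X).1 hX k

end ICEPaper
end
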